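/- Let M be a topological space and let 𝔅 be a quasipoint of the lattice T(M) of open subsets of M. Then 𝔅^r := {int(closure(U)) : U ∈ 𝔅} is a quasipoint of the lattice T_r(M) of regular open subsets of M. -/

import Mathlib

/-!
Regularization `U ↦ int(cl U)` is monotone and sends only `∅` to `∅`, so it maps filter bases
to filter bases. For maximality, let `V` belong to a filter base `C ⊇ 𝔅^r` of regular open sets.
For `U ∈ 𝔅`, `V` and `int(cl U)` lie above a common nonempty open `W ∈ C`; as `W ⊆ cl U`, `W`
meets `U`, hence so does `V`. A quasipoint of a lattice contains every element meeting all of its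
members, so `V ∈ 𝔅` and `V = int(cl V) ∈ 𝔅^r`.
-/

open TopologicalSpace

theorem regopen_idem {X : Type*} [TopologicalSpace X] (s : Set X) :
    interior (closure (interior (closure s))) = interior (closure s) := by
  apply subset_antisymm
  · apply interior_mono
    calc closure (interior (closure s)) ⊆ closure (closure s) := closure_mono interior_subset
    _ = closure s := closure_closure
  · exact isOpen_interior.subset_interior_closure

/-- The lattice `T_r(M)` of regular open subsets of `M`, ordered by inclusion. -/
abbrev RegOpen (M : Type*) [TopologicalSpace M] : Type _ :=
  {U : Set M // U = interior (closure U)}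

instance {M : Type*} [TopologicalSpace M] : OrderBot (RegOpen M) where
  bot := ⟨∅, by simp⟩
  bot_le U := by exact Set.empty_subset _

/-- The regularization map `U ↦ int(closure U)` from open sets to regular open sets. -/
def Opens.reg {M : Type*} [TopologicalSpace M] (U : Opens M) : RegOpen M :=
  ⟨interior (closure (U : Set M)), (regopen_idem _).symm⟩

/-- A filter base in a partially ordered set `L` with least element `⊥`. -/
def IsFilterBase {L : Type*} [PartialOrder L] [OrderBot L] (B : Set L) : Prop :=
  B.Nonempty ∧ (⊥ : L) ∉ B ∧ ∀ a ∈ B, ∀ b ∈ B, ∃ c ∈ B, c ≤ a ∧ c ≤ b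

/-- A quasipoint of `L`: a maximal filter base. -/
def IsQuasipoint {L : Type*} [PartialOrder L] [OrderBot L] (B : Set L) : Prop :=
  IsFilterBase B ∧ ∀ C : Set L, IsFilterBase C → B ⊆ C → C = B

lemma IsFilterBase.image {L L' : Type*} [PartialOrder L] [OrderBot L] [PartialOrder L']
    [OrderBot L'] {f : L → L'} (hf : Monotone f) (hf_bot : ∀ a, f a = ⊥ → a = ⊥) {B : Set L}
    (hB : IsFilterBase B) : IsFilterBase (f '' B) := by
  obtain ⟨hne, hbot, hdir⟩ := hB
  refine ⟨hne.image f, fun ⟨a, ha, hfa⟩ => hbot (hf_bot a hfa ▸ ha), ?_⟩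
  rintro _ ⟨a, ha, rfl⟩ _ ⟨b, hb, rfl⟩
  obtain ⟨c, hc, hca, hcb⟩ := hdir a ha b hb
  exact ⟨f c, ⟨c, hc, rfl⟩, hf hca, hf hcb⟩

/-- Maximality is used through the filter base of all non-zero upper bounds of the `a ⊓ b`,
`b ∈ B`, which contains both `B` and `a`. -/
lemma IsQuasipoint.mem_of_forall_inf_ne_bot {L : Type*} [Lattice L] [OrderBot L] {B : Set L}
    (hB : IsQuasipoint B) {a : L} (ha : ∀ b ∈ B, a ⊓ b ≠ ⊥) : a ∈ B := by
  obtain ⟨⟨⟨b₀, hb₀⟩, hbot, hdir⟩, hmax⟩ := hB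
  set D : Set L := {c | c ≠ ⊥ ∧ ∃ b ∈ B, a ⊓ b ≤ c}
  have hD : IsFilterBase D := by
    refine ⟨⟨a ⊓ b₀, ha b₀ hb₀, b₀, hb₀, le_rfl⟩, fun h => h.1 rfl, ?_⟩
    rintro c₁ ⟨-, b₁, hb₁, hc₁⟩ c₂ ⟨-, b₂, hb₂, hc₂⟩
    obtain ⟨b, hb, hbb₁, hbb₂⟩ := hdir b₁ hb₁ b₂ hb₂
    exact ⟨a ⊓ b, ⟨ha b hb, b, hb, le_rfl⟩,
      (inf_le_inf_left a hbb₁).trans hc₁, (inf_le_inf_left a hbb₂).trans hc₂⟩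
  have hBD : B ⊆ D := fun b hb => ⟨fun h => hbot (h ▸ hb), b, hb, inf_le_right⟩
  exact hmax D hD hBD ▸ ⟨fun h => ha b₀ hb₀ (by simp [h]), b₀, hb₀, inf_le_left⟩

section RegOpen

variable {M : Type*} [TopologicalSpace M]

def RegOpen.toOpens (V : RegOpen M) : Opens M := ⟨V.1, V.2 ▸ isOpen_interior⟩

lemma RegOpen.reg_toOpens (V : RegOpen M) : Opens.reg V.toOpens = V :=
  Subtype.ext V.2.symm

lemma RegOpen.ne_bot_iff_nonempty {V : RegOpen M} : V ≠ ⊥ ↔ V.1.Nonempty := by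
  rw [Set.nonempty_iff_ne_empty, Ne, Ne, ← Subtype.val_inj]
  rfl

lemma Opens.reg_mono : Monotone (Opens.reg (M := M)) :=
  fun _ _ h => interior_mono (closure_mono h)

lemma Opens.eq_bot_of_reg_eq_bot {U : Opens M} (hU : Opens.reg U = ⊥) : U = ⊥ :=
  Opens.coe_eq_empty.mp (Set.subset_empty_iff.mp
    (U.isOpen.subset_interior_closure.trans_eq (congrArg Subtype.val hU)))

lemma RegOpen.toOpens_inf_ne_bot {U : Opens M} {W : RegOpen M} (hW : W ≠ ⊥)
    (hWU : W ≤ Opens.reg U) : W.toOpens ⊓ U ≠ ⊥ := by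
  rw [Opens.ne_bot_iff_nonempty, Opens.coe_inf, Set.inter_comm,
    ← closure_inter_open_nonempty_iff W.toOpens.isOpen, Set.inter_eq_right.mpr]
  · exact RegOpen.ne_bot_iff_nonempty.mp hW
  · exact Set.Subset.trans hWU interior_subset

end RegOpen

/-- If `𝔅` is a quasipoint of the lattice `T(M)` of open sets, then
`𝔅^r = {int(closure U) : U ∈ 𝔅}` is a quasipoint of the lattice `T_r(M)`
of regular open sets. -/
theorem quasipoint_reg_image {M : Type*} [TopologicalSpace M]
    {𝔅 : Set (Opens M)} (h𝔅 : IsQuasipoint 𝔅) :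
    IsQuasipoint (Opens.reg '' 𝔅) := by
  refine ⟨h𝔅.1.image Opens.reg_mono fun _ => Opens.eq_bot_of_reg_eq_bot,
    fun C hC hsub => Set.Subset.antisymm (fun V hV => ?_) hsub⟩
  have hmeets : ∀ U ∈ 𝔅, V.toOpens ⊓ U ≠ ⊥ := by
    intro U hU
    obtain ⟨W, hW, hWU, hWV⟩ := hC.2.2 _ (hsub ⟨U, hU, rfl⟩) V hV
    exact ne_bot_of_le_ne_bot (RegOpen.toOpens_inf_ne_bot (ne_of_mem_of_not_mem hW hC.2.1) hWU)
      (inf_le_inf_right U (show W.toOpens ≤ V.toOpens from hWV))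
  exact ⟨V.toOpens, h𝔅.mem_of_forall_inf_ne_bot hmeets, V.reg_toOpens⟩
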